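/- Let k = p·2^q with p odd and q ≥ 1. Then K_k[nK_1] (equivalently, the complete multipartite graph with k parts of size n) admits an interval coloring with W(K_k[nK_1]) ≥ (2k − p − q)·n − 1. -/

import Mathlib

open SimpleGraph

/-- `c` is an interval `t`-coloring of `G`: edges get colors in `{1,…,t}`, every color
`1,…,t` is used, adjacent edges get distinct colors, and the set of colors of edges
incident to any vertex is an interval of integers. -/
def IsIntervalColoring {V : Type*} (G : SimpleGraph V) (t : ℕ) (c : Sym2 V → ℕ) : Prop :=
  (∀ e ∈ G.edgeSet, 1 ≤ c e ∧ c e ≤ t) ∧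
  (∀ i, 1 ≤ i → i ≤ t → ∃ e ∈ G.edgeSet, c e = i) ∧
  (∀ v w₁ w₂, G.Adj v w₁ → G.Adj v w₂ → w₁ ≠ w₂ → c s(v, w₁) ≠ c s(v, w₂)) ∧
  (∀ v i j k, (∃ w, G.Adj v w ∧ c s(v, w) = i) → (∃ w, G.Adj v w ∧ c s(v, w) = k) →
    i ≤ j → j ≤ k → ∃ w, G.Adj v w ∧ c s(v, w) = j)

/-- `G` has an interval `t`-coloring. -/
def HasIntervalColoring {V : Type*} (G : SimpleGraph V) (t : ℕ) : Prop :=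
  ∃ c : Sym2 V → ℕ, IsIntervalColoring G t c

/-- `G` is interval colorable (`G ∈ 𝔑`). -/
def IntervalColorable {V : Type*} (G : SimpleGraph V) : Prop :=
  ∃ t : ℕ, 1 ≤ t ∧ HasIntervalColoring G t

/-- `w G`: the least number of colors in an interval coloring of `G`. -/
noncomputable def wNum {V : Type*} (G : SimpleGraph V) : ℕ :=
  sInf {t | HasIntervalColoring G t}

/-- `W G`: the greatest number of colors in an interval coloring of `G`. -/
noncomputable def WNum {V : Type*} (G : SimpleGraph V) : ℕ :=
  sSup {t | HasIntervalColoring G t}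

/-- `G` is `r`-regular: every vertex has exactly `r` neighbors. -/
def IsRegularGraph {V : Type*} (G : SimpleGraph V) (r : ℕ) : Prop :=
  ∀ v : V, (G.neighborSet v).ncard = r

/-- `c` is a proper edge coloring of `G` using colors `0,…,k-1`. -/
def IsProperEdgeColoring {V : Type*} (G : SimpleGraph V) (k : ℕ) (c : Sym2 V → ℕ) : Prop :=
  (∀ e ∈ G.edgeSet, c e < k) ∧
  (∀ v w₁ w₂, G.Adj v w₁ → G.Adj v w₂ → w₁ ≠ w₂ → c s(v, w₁) ≠ c s(v, w₂))

/-- The chromatic index `χ'(G)`. -/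
noncomputable def edgeChromaticNumber {V : Type*} (G : SimpleGraph V) : ℕ :=
  sInf {k | ∃ c : Sym2 V → ℕ, IsProperEdgeColoring G k c}

/-- `G` is 1-factorable: its edge set decomposes into perfect matchings. -/
def IsOneFactorable {V : Type*} (G : SimpleGraph V) : Prop :=
  ∃ (n : ℕ) (f : Fin n → SimpleGraph.Subgraph G),
    (∀ i, (f i).IsPerfectMatching) ∧
    (∀ e ∈ G.edgeSet, ∃! i, e ∈ (f i).edgeSet)

/-- The tensor (direct) product `G × H`. -/
def tensorProd {α β : Type*} (G : SimpleGraph α) (H : SimpleGraph β) :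
    SimpleGraph (α × β) where
  Adj p q := G.Adj p.1 q.1 ∧ H.Adj p.2 q.2
  symm := Std.Symm.mk fun p q ⟨h₁, h₂⟩ => ⟨h₁.symm, h₂.symm⟩
  loopless := Std.Irrefl.mk fun p h => G.loopless.irrefl p.1 h.1

/-- The strong tensor (semistrong) product `G ⊗ H`. -/
def strongTensorProd {α β : Type*} (G : SimpleGraph α) (H : SimpleGraph β) :
    SimpleGraph (α × β) where
  Adj p q := (G.Adj p.1 q.1 ∧ H.Adj p.2 q.2) ∨ (p.2 = q.2 ∧ G.Adj p.1 q.1)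
  symm := Std.Symm.mk fun p q h => by
    rcases h with ⟨h₁, h₂⟩ | ⟨h₁, h₂⟩
    · exact Or.inl ⟨h₁.symm, h₂.symm⟩
    · exact Or.inr ⟨h₁.symm, h₂.symm⟩
  loopless := Std.Irrefl.mk fun p h => by
    rcases h with ⟨h₁, _⟩ | ⟨_, h₁⟩ <;> exact G.loopless.irrefl p.1 h₁

/-- The strong product `G ⊠ H`. -/
def strongProd {α β : Type*} (G : SimpleGraph α) (H : SimpleGraph β) :
    SimpleGraph (α × β) where
  Adj p q := (G.Adj p.1 q.1 ∧ H.Adj p.2 q.2) ∨ (p.1 = q.1 ∧ H.Adj p.2 q.2) ∨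
    (p.2 = q.2 ∧ G.Adj p.1 q.1)
  symm := Std.Symm.mk fun p q h => by
    rcases h with ⟨h₁, h₂⟩ | ⟨h₁, h₂⟩ | ⟨h₁, h₂⟩
    · exact Or.inl ⟨h₁.symm, h₂.symm⟩
    · exact Or.inr (Or.inl ⟨h₁.symm, h₂.symm⟩)
    · exact Or.inr (Or.inr ⟨h₁.symm, h₂.symm⟩)
  loopless := Std.Irrefl.mk fun p h => by
    rcases h with ⟨h₁, _⟩ | ⟨_, h₂⟩ | ⟨_, h₁⟩
    · exact G.loopless.irrefl p.1 h₁
    · exact H.loopless.irrefl p.2 h₂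
    · exact G.loopless.irrefl p.1 h₁

/-- The lexicographic product (composition) `G[H]`. -/
def lexProd {α β : Type*} (G : SimpleGraph α) (H : SimpleGraph β) :
    SimpleGraph (α × β) where
  Adj p q := G.Adj p.1 q.1 ∨ (p.1 = q.1 ∧ H.Adj p.2 q.2)
  symm := Std.Symm.mk fun p q h => by
    rcases h with h₁ | ⟨h₁, h₂⟩
    · exact Or.inl h₁.symm
    · exact Or.inr ⟨h₁.symm, h₂.symm⟩
  loopless := Std.Irrefl.mk fun p h => by
    rcases h with h₁ | ⟨_, h₂⟩
    · exact G.loopless.irrefl p.1 h₁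
    · exact H.loopless.irrefl p.2 h₂

/-!
Replacing each vertex `x` of `G` by `n` independent vertices `(x, a)`, an interval `t`-colouring
`c` of `G` becomes one of `G[nK₁]` with `n (t + 1) - 1` colours by giving `(x, a)(y, b)` the colour
`n (c(xy) - 1) + a + b + 1`: the colours at `(x, a)` are the blocks of `n` consecutive colours
attached to the colours at `x`, and consecutive blocks are adjacent. So it suffices to
interval-colour `K_k` with `2k - p - q - 1` colours. `K_{2p}` has such a colouring with `3p - 2`
colours, and `K_{2K}` is two copies of `K_K` joined by `K_{K,K}`: colour the first copy as `K_K`,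
the second `2K - 1` colours higher, and `K_{K,K}` in between. To iterate this, one carries along
an interval colouring of `K_{K,K}` compatible with that of `K_K`; if `S` is the lowest colour at
the last vertex, `K_K` gets `K + S - 1` colours and each doubling adds `K - 1` to `S`.
-/

namespace Nat

lemma eq_of_mul_add_eq_mul_add {n u v b d : ℕ} (hb : b < n) (hd : d < n)
    (h : n * u + b = n * v + d) : u = v := by
  have hn : 0 < n := by omega
  have := congrArg (· / n) h
  simpa [Nat.mul_add_div hn, Nat.div_eq_of_lt hb, Nat.div_eq_of_lt hd] using this

lemma eq_of_add_mod_eq_add_mod {p a x y : ℕ} (hx : x < p) (hy : y < p)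
    (h : (a + x) % p = (a + y) % p) : x = y :=
  (Nat.ModEq.add_left_cancel' a h).eq_of_lt_of_lt hx hy

lemma exists_add_mod_eq {p a r : ℕ} (ha : a < p) (hr : r < p) : ∃ s < p, (a + s) % p = r := by
  refine ⟨(r + p - a) % p, Nat.mod_lt _ (by omega), ?_⟩
  rw [Nat.add_mod_mod, show a + (r + p - a) = r + p by omega, Nat.add_mod_right,
    Nat.mod_eq_of_lt hr]

lemma mul_add_one_eq_mul_sub_one_add (n : ℕ) {t : ℕ} (ht : 1 ≤ t) :
    n * (t + 1) = n * (t - 1) + 2 * n := by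
  obtain ⟨t, rfl⟩ := Nat.exists_eq_add_of_le' ht
  simp only [Nat.add_sub_cancel]
  ring

end Nat

open Set

lemma Set.BijOn.union_Ico {α β : Type*} [LinearOrder β] {f : α → β} {s₁ s₂ : Set α} {a b c : β}
    (h₁ : BijOn f s₁ (Ico a b)) (h₂ : BijOn f s₂ (Ico b c)) (hab : a ≤ b) (hbc : b ≤ c) :
    BijOn f (s₁ ∪ s₂) (Ico a c) := by
  have hlt : ∀ x ∈ s₁, ∀ y ∈ s₂, f x < f y := fun x hx y hy =>
    (h₁.mapsTo hx).2.trans_le (h₂.mapsTo hy).1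
  have hdisj : Disjoint s₁ s₂ :=
    disjoint_left.2 fun x hx₁ hx₂ => (hlt x hx₁ x hx₂).false
  rw [← Ico_union_Ico_eq_Ico hab hbc]
  exact h₁.union h₂ ((injOn_union hdisj).2
    ⟨h₁.injOn, h₂.injOn, fun x hx y hy => (hlt x hx y hy).ne⟩)

lemma Set.BijOn.shift_Ico {f : ℕ → ℕ} {s : Set ℕ} {a b a' b' : ℕ} (h : BijOn f s (Ico a b))
    (K d : ℕ) (ha : a' = a + d) (hb : b' = b + d) :
    BijOn (fun w => f (w - K) + d) {w | K ≤ w ∧ w - K ∈ s} (Ico a' b') := by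
  subst ha hb
  refine ⟨fun w hw => ?_, fun w₁ ⟨hK₁, hw₁⟩ w₂ ⟨hK₂, hw₂⟩ heq => ?_, fun y hy => ?_⟩
  · have := h.mapsTo hw.2
    simp only [mem_Ico] at this ⊢
    omega
  · have := h.injOn hw₁ hw₂ (by simpa using heq)
    omega
  · obtain ⟨u, hu, hfu⟩ := h.surjOn (show y - d ∈ Ico a b by simp only [mem_Ico] at hy ⊢; omega)
    refine ⟨u + K, ⟨by omega, by simpa using hu⟩, ?_⟩
    simp only [Nat.add_sub_cancel, hfu]
    simp only [mem_Ico] at hy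
    omega

section LexBlowUp

variable {V : Type*} {G : SimpleGraph V} {n t : ℕ} {c : Sym2 V → ℕ}

@[simp]
lemma lexProd_bot_adj {x y : V × Fin n} :
    (lexProd G (⊥ : SimpleGraph (Fin n))).Adj x y ↔ G.Adj x.1 y.1 := by
  simp [lexProd]

lemma HasIntervalColoring.le_WNum [Finite V] (h : HasIntervalColoring G t) : t ≤ WNum G := by
  refine le_csSup ⟨Nat.card (Sym2 V), fun t' ⟨c, _, hsurj, _⟩ => ?_⟩ h
  choose e he hce using fun i : Fin t' => hsurj (i + 1) (by omega) (by omega)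
  have he_inj : Function.Injective e := fun i j hij => by
    have := hce i
    rw [hij, hce j] at this
    omega
  simpa using Nat.card_le_card_of_injective e he_inj

def blowUpColoring (c : Sym2 V → ℕ) (n : ℕ) : Sym2 (V × Fin n) → ℕ :=
  Sym2.lift ⟨fun x y => n * (c s(x.1, y.1) - 1) + x.2 + y.2 + 1, fun x y => by
    simp only [Sym2.eq_swap]; omega⟩

@[simp]
lemma blowUpColoring_mk (x y : V × Fin n) :
    blowUpColoring c n s(x, y) = n * (c s(x.1, y.1) - 1) + x.2 + y.2 + 1 := rfl

lemma exists_blowUpColoring_eq_of_adj {u w : V} (huw : G.Adj u w) (a : Fin n) {j : ℕ}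
    (hj₁ : n * (c s(u, w) - 1) + a + 1 ≤ j) (hj₂ : j ≤ n * (c s(u, w) - 1) + a + n) :
    ∃ y, (lexProd G ⊥).Adj (u, a) y ∧ blowUpColoring c n s((u, a), y) = j :=
  ⟨(w, ⟨j - (n * (c s(u, w) - 1) + a + 1), by omega⟩), lexProd_bot_adj.2 huw, by simp; omega⟩

namespace IsIntervalColoring

lemma blowUpColoring_le (hc : IsIntervalColoring G t c) (ht : 1 ≤ t) {e : Sym2 (V × Fin n)}
    (he : e ∈ (lexProd G ⊥).edgeSet) :
    blowUpColoring c n e ≤ n * (t + 1) - 1 := by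
  induction e using Sym2.ind with
  | _ x y =>
    have hct := Nat.mul_le_mul_left n
      (Nat.sub_le_sub_right (hc.1 s(x.1, y.1) (lexProd_bot_adj.1 he)).2 1)
    have := Nat.mul_add_one_eq_mul_sub_one_add n ht
    simp only [blowUpColoring_mk]
    omega

lemma blowUpColoring_surj (hc : IsIntervalColoring G t c) (ht : 1 ≤ t) {i : ℕ} (hi₁ : 1 ≤ i)
    (hi₂ : i ≤ n * (t + 1) - 1) :
    ∃ e ∈ (lexProd G ⊥).edgeSet, blowUpColoring c n e = i := by
  have hn : 0 < n := Nat.pos_of_ne_zero (by rintro rfl; omega)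
  have hsplit := Nat.mul_add_one_eq_mul_sub_one_add n ht
  obtain ⟨m, a, hm₁, hmt, hi⟩ : ∃ m, ∃ a : Fin n, 1 ≤ m ∧ m ≤ t ∧
      n * (m - 1) + a + 1 ≤ i ∧ i ≤ n * (m - 1) + a + n := by
    by_cases hit : i ≤ n * (t - 1) + n
    · have hnt : n * t = n * (t - 1) + n := by rw [← Nat.mul_add_one, Nat.sub_add_cancel ht]
      have hdiv : (i - 1) / n < t := (Nat.div_lt_iff_lt_mul hn).2 (by rw [mul_comm]; omega)
      have := Nat.div_add_mod (i - 1) n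
      have := Nat.mod_lt (i - 1) hn
      refine ⟨(i - 1) / n + 1, ⟨0, hn⟩, Nat.le_add_left 1 _, hdiv, ?_⟩
      simp only [Nat.add_sub_cancel]
      omega
    · exact ⟨t, ⟨n - 1, by omega⟩, ht, le_rfl, by simp only; omega⟩
  obtain ⟨e, he, hce⟩ := hc.2.1 m hm₁ hmt
  induction e using Sym2.ind with
  | _ u w =>
    obtain ⟨y, hy, hcy⟩ :=
      exists_blowUpColoring_eq_of_adj (c := c) he a (hce ▸ hi.1) (hce ▸ hi.2)
    exact ⟨_, hy, hcy⟩

lemma blowUpColoring_ne (hc : IsIntervalColoring G t c) {v w₁ w₂ : V × Fin n}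
    (h₁ : (lexProd G ⊥).Adj v w₁) (h₂ : (lexProd G ⊥).Adj v w₂) (hne : w₁ ≠ w₂) :
    blowUpColoring c n s(v, w₁) ≠ blowUpColoring c n s(v, w₂) := by
  intro h
  have hc₁ := (hc.1 s(v.1, w₁.1) (lexProd_bot_adj.1 h₁)).1
  have hc₂ := (hc.1 s(v.1, w₂.1) (lexProd_bot_adj.1 h₂)).1
  simp only [blowUpColoring_mk] at h
  have hblock : c s(v.1, w₁.1) - 1 = c s(v.1, w₂.1) - 1 :=
    Nat.eq_of_mul_add_eq_mul_add w₁.2.isLt w₂.2.isLt (by omega)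
  have hfst : w₁.1 = w₂.1 := by
    by_contra hfst
    exact hc.2.2.1 v.1 w₁.1 w₂.1 (lexProd_bot_adj.1 h₁) (lexProd_bot_adj.1 h₂) hfst (by omega)
  rw [hblock] at h
  exact hne (Prod.ext hfst (Fin.ext (by omega)))

lemma blowUpColoring_interval (hc : IsIntervalColoring G t c) (v : V × Fin n) {i j k : ℕ}
    (hi : ∃ w, (lexProd G ⊥).Adj v w ∧ blowUpColoring c n s(v, w) = i)
    (hk : ∃ w, (lexProd G ⊥).Adj v w ∧ blowUpColoring c n s(v, w) = k)
    (hij : i ≤ j) (hjk : j ≤ k) :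
    ∃ w, (lexProd G ⊥).Adj v w ∧ blowUpColoring c n s(v, w) = j := by
  obtain ⟨wi, hai, rfl⟩ := hi
  obtain ⟨wk, hak, rfl⟩ := hk
  simp only [blowUpColoring_mk] at hij hjk
  have hn : 0 < n := Nat.pos_of_ne_zero (by rintro rfl; exact wi.2.elim0)
  have hck := (hc.1 s(v.1, wk.1) (lexProd_bot_adj.1 hak)).1
  have hnk : n * c s(v.1, wk.1) = n * (c s(v.1, wk.1) - 1) + n := by
    rw [← Nat.mul_add_one, Nat.sub_add_cancel hck]
  -- `j` lies in the block of the colour `u + 1`, which lies between those of `i` and `k`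
  obtain ⟨u, r, hr, hj⟩ : ∃ u r, r < n ∧ j - v.2 - 1 = n * u + r :=
    ⟨_, _, Nat.mod_lt _ hn, (Nat.div_add_mod _ _).symm⟩
  have hnu : n * (u + 1) = n * u + n := Nat.mul_add_one n u
  have hiu : c s(v.1, wi.1) - 1 < u + 1 := Nat.lt_of_mul_lt_mul_left (a := n) (by omega)
  have huk : u < c s(v.1, wk.1) := Nat.lt_of_mul_lt_mul_left (a := n) (by omega)
  obtain ⟨z, hz, hcz⟩ := hc.2.2.2 v.1 _ (u + 1) _ ⟨wi.1, lexProd_bot_adj.1 hai, rfl⟩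
    ⟨wk.1, lexProd_bot_adj.1 hak, rfl⟩ (by omega) huk
  exact exists_blowUpColoring_eq_of_adj hz v.2 (by rw [hcz, Nat.add_sub_cancel]; omega)
    (by rw [hcz, Nat.add_sub_cancel]; omega)

theorem lexProd_bot (hc : IsIntervalColoring G t c) (ht : 1 ≤ t) :
    IsIntervalColoring (lexProd G (⊥ : SimpleGraph (Fin n))) (n * (t + 1) - 1)
      (blowUpColoring c n) :=
  ⟨fun _ he => ⟨by induction ‹Sym2 _› using Sym2.ind; simp, hc.blowUpColoring_le ht he⟩,
    fun _ hi₁ hi₂ => hc.blowUpColoring_surj ht hi₁ hi₂, fun _ _ _ => hc.blowUpColoring_ne,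
    fun v _ _ _ => hc.blowUpColoring_interval v⟩

end IsIntervalColoring

end LexBlowUp

/-- Vertices `0, …, K - 1`, colours counted from `0`: `c` is an interval colouring of `K_K` in
which the colours at `v` are `[L v, L v + K - 1)`, and `N` colours `K_{K,K}` (both sides indexed
by `0, …, K - 1`) so that the colours at `v` are `[L v, L v + K)`. -/
structure DoublableColoring (K S : ℕ) where
  c : ℕ → ℕ → ℕ
  N : ℕ → ℕ → ℕ
  L : ℕ → ℕ
  two_le : 2 ≤ K
  c_symm : ∀ v w, c v w = c w v
  N_symm : ∀ v w, N v w = N w v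
  L_zero : L 0 = 0
  L_last : L (K - 1) = S
  L_le : ∀ v < K, L v ≤ S
  c_bijOn : ∀ v < K, BijOn (c v) {w | w < K ∧ w ≠ v} (Ico (L v) (L v + (K - 1)))
  N_bijOn : ∀ v < K, BijOn (N v) (Iio K) (Ico (L v) (L v + K))

namespace DoublableColoring

variable {K S : ℕ} (P : DoublableColoring K S)

def toColoring : Sym2 (Fin K) → ℕ :=
  Sym2.lift ⟨fun v w => P.c v w + 1, fun v w => by simp only [P.c_symm v]⟩

lemma exists_adj_toColoring_eq_iff (v : Fin K) (j : ℕ) :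
    (∃ w, (⊤ : SimpleGraph (Fin K)).Adj v w ∧ P.toColoring s(v, w) = j) ↔
      P.L v < j ∧ j < P.L v + K := by
  have := P.two_le
  constructor
  · rintro ⟨w, hvw, rfl⟩
    have := (P.c_bijOn v v.isLt).mapsTo ⟨w.isLt, Fin.val_ne_of_ne hvw.symm⟩
    simp only [mem_Ico] at this
    simp only [toColoring, Sym2.lift_mk]
    omega
  · rintro ⟨hj₁, hj₂⟩
    obtain ⟨w, ⟨hw, hwv⟩, hcw⟩ :=
      (P.c_bijOn v v.isLt).surjOn (show j - 1 ∈ Ico (P.L v) (P.L v + (K - 1)) by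
        simp only [mem_Ico]; omega)
    refine ⟨⟨w, hw⟩, fun h => hwv (congrArg Fin.val h).symm, ?_⟩
    simp only [toColoring, Sym2.lift_mk, hcw]
    omega

lemma add_one_lt (P : DoublableColoring K S) : S + 1 < K := by
  have := P.two_le
  have h₁ := (P.c_bijOn (K - 1) (by omega)).mapsTo (show 0 ∈ {w | w < K ∧ w ≠ K - 1} from
    ⟨by omega, by omega⟩)
  have h₂ := (P.c_bijOn 0 (by omega)).mapsTo (show K - 1 ∈ {w | w < K ∧ w ≠ 0} from
    ⟨by omega, by omega⟩)
  simp only [mem_Ico, P.L_last, P.L_zero, P.c_symm (K - 1)] at h₁ h₂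
  omega

theorem isIntervalColoring :
    IsIntervalColoring (⊤ : SimpleGraph (Fin K)) (S + K - 1) P.toColoring := by
  have := P.add_one_lt
  refine ⟨fun e he => ?_, fun i hi₁ hi₂ => ?_, fun v w₁ w₂ h₁ h₂ hne => ?_,
    fun v i j k hi hk hij hjk => (P.exists_adj_toColoring_eq_iff v j).2 ?_⟩
  · induction e using Sym2.ind with
    | _ v w =>
      have := (P.exists_adj_toColoring_eq_iff v _).1 ⟨w, he, rfl⟩
      have := P.L_le v v.isLt
      omega
  · -- the colours `[1, K)` are seen at vertex `0` and `[S + 1, S + K)` at vertex `K - 1`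
    obtain ⟨v, hLv, hiv⟩ : ∃ v : Fin K, P.L v < i ∧ i < P.L v + K := by
      by_cases hiK : i < K
      · exact ⟨⟨0, by omega⟩, by simp only [P.L_zero]; omega, by simp only [P.L_zero]; omega⟩
      · exact ⟨⟨K - 1, by omega⟩, by simp only [P.L_last]; omega, by simp only [P.L_last]; omega⟩
    obtain ⟨w, hvw, hcw⟩ := (P.exists_adj_toColoring_eq_iff v i).2 ⟨hLv, hiv⟩
    exact ⟨s(v, w), hvw, hcw⟩
  · intro h
    simp only [toColoring, Sym2.lift_mk, Nat.add_right_cancel_iff] at h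
    exact hne (Fin.ext ((P.c_bijOn v v.isLt).injOn ⟨w₁.isLt, fun h' => h₁.ne (Fin.ext h'.symm)⟩
      ⟨w₂.isLt, fun h' => h₂.ne (Fin.ext h'.symm)⟩ h))
  · have := (P.exists_adj_toColoring_eq_iff v i).1 hi
    have := (P.exists_adj_toColoring_eq_iff v k).1 hk
    omega

section Base

variable {p : ℕ}

/-- The vertex `2 i + ε` of `K_{2p}` has index `i` on side `ε`; reading the odd side backwards
pairs `2 i` with `2 (p - 1 - i) + 1`. -/
def mirror (p v : ℕ) : ℕ := if v % 2 = 0 then v / 2 else p - 1 - v / 2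

/-- Edges inside a side and between paired vertices get the middle colours `[p - 1, 2p - 1)`
from the cyclic Latin square `(i + j) mod p` in mirrored indices; the other edges `2 i + ε`,
`2 j + 1 - ε` get `i + j` below the middle colours or `i + j + p - 1` above them. -/
def baseC (p v w : ℕ) : ℕ :=
  if v % 2 = w % 2 ∨ mirror p v = mirror p w then p - 1 + (mirror p v + mirror p w) % p
  else if v / 2 + w / 2 + 1 < p then v / 2 + w / 2 else v / 2 + w / 2 + p - 1

def baseN (p v w : ℕ) : ℕ := v / 2 + w / 2 + if v % 2 = w % 2 then 0 else p

lemma mirror_lt {v : ℕ} (hv : v < 2 * p) : mirror p v < p := by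
  unfold mirror; split_ifs <;> omega

lemma baseC_of_mid {v w : ℕ} (h : v % 2 = w % 2 ∨ mirror p v = mirror p w) :
    baseC p v w = p - 1 + (mirror p v + mirror p w) % p := if_pos h

lemma baseC_of_not_mid {v w : ℕ} (hv : v < 2 * p) (hw : w < 2 * p)
    (h : ¬ (v % 2 = w % 2 ∨ mirror p v = mirror p w)) :
    v / 2 + w / 2 + 1 < p ∧ baseC p v w = v / 2 + w / 2 ∨
      p ≤ v / 2 + w / 2 ∧ baseC p v w = v / 2 + w / 2 + p - 1 := by
  have hpair : v / 2 + w / 2 + 1 ≠ p := by unfold mirror at h; split_ifs at h <;> omega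
  unfold baseC
  split_ifs <;> omega

lemma baseC_mapsTo {v : ℕ} (hv : v < 2 * p) :
    MapsTo (baseC p v) {w | w < 2 * p ∧ w ≠ v} (Ico (v / 2) (v / 2 + (2 * p - 1))) := by
  rintro w ⟨hw, -⟩
  rw [mem_Ico]
  by_cases hm : v % 2 = w % 2 ∨ mirror p v = mirror p w
  · have := Nat.mod_lt (mirror p v + mirror p w) (by omega : 0 < p)
    rw [baseC_of_mid hm]
    omega
  · rcases baseC_of_not_mid hv hw hm with ⟨_, e⟩ | ⟨_, e⟩ <;> omega

lemma baseC_injOn {v : ℕ} (hv : v < 2 * p) :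
    InjOn (baseC p v) {w | w < 2 * p ∧ w ≠ v} := by
  rintro w₁ ⟨hw₁, hw₁v⟩ w₂ ⟨hw₂, hw₂v⟩ h
  have := Nat.mod_lt (mirror p v + mirror p w₁) (by omega : 0 < p)
  have := Nat.mod_lt (mirror p v + mirror p w₂) (by omega : 0 < p)
  by_cases hm₁ : v % 2 = w₁ % 2 ∨ mirror p v = mirror p w₁ <;>
    by_cases hm₂ : v % 2 = w₂ % 2 ∨ mirror p v = mirror p w₂
  · rw [baseC_of_mid hm₁, baseC_of_mid hm₂, Nat.add_left_cancel_iff] at h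
    have := Nat.eq_of_add_mod_eq_add_mod (mirror_lt hw₁) (mirror_lt hw₂) h
    unfold mirror at *
    split_ifs at * <;> omega
  · rw [baseC_of_mid hm₁] at h
    rcases baseC_of_not_mid hv hw₂ hm₂ with ⟨_, e⟩ | ⟨_, e⟩ <;> omega
  · rw [baseC_of_mid hm₂] at h
    rcases baseC_of_not_mid hv hw₁ hm₁ with ⟨_, e⟩ | ⟨_, e⟩ <;> omega
  · rcases baseC_of_not_mid hv hw₁ hm₁ with ⟨_, e₁⟩ | ⟨_, e₁⟩ <;>
      rcases baseC_of_not_mid hv hw₂ hm₂ with ⟨_, e₂⟩ | ⟨_, e₂⟩ <;> omega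

lemma exists_mirror_eq {s ε : ℕ} (hs : s < p) (hε : ε < 2) :
    ∃ w < 2 * p, w % 2 = ε ∧ mirror p w = s :=
  ⟨if ε = 0 then 2 * s else 2 * (p - 1 - s) + 1, by split_ifs <;> omega,
    by split_ifs <;> omega, by unfold mirror; split_ifs <;> omega⟩

lemma baseC_surjOn {v : ℕ} (hv : v < 2 * p) :
    SurjOn (baseC p v) {w | w < 2 * p ∧ w ≠ v} (Ico (v / 2) (v / 2 + (2 * p - 1))) := by
  rintro x ⟨hx₁, hx₂⟩
  rcases lt_or_ge (x + 1) p with hlow | hx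
  · have hm : ¬ (v % 2 = (2 * (x - v / 2) + (1 - v % 2)) % 2 ∨
        mirror p v = mirror p (2 * (x - v / 2) + (1 - v % 2))) := by
      unfold mirror; split_ifs <;> omega
    refine ⟨2 * (x - v / 2) + (1 - v % 2), ⟨by omega, by omega⟩, ?_⟩
    rcases baseC_of_not_mid hv (by omega) hm with ⟨_, e⟩ | ⟨_, e⟩ <;> omega
  rcases lt_or_ge x (2 * p - 1) with hmid | hhigh
  · -- the partner of `v` on the other side takes the one middle colour missing on its own side
    obtain ⟨s, hs, hsx⟩ :=
      Nat.exists_add_mod_eq (mirror_lt hv) (show x - (p - 1) < p by omega)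
    obtain ⟨w, hw, hwε, hws⟩ := exists_mirror_eq hs
      (ε := if s = mirror p v then 1 - v % 2 else v % 2) (by split_ifs <;> omega)
    have hm : v % 2 = w % 2 ∨ mirror p v = mirror p w := by split_ifs at hwε <;> omega
    refine ⟨w, ⟨hw, fun hwv => ?_⟩, ?_⟩
    · subst hwv; split_ifs at hwε <;> omega
    · show baseC p v w = x
      rw [baseC_of_mid hm, hws, hsx]
      omega
  · have hm : ¬ (v % 2 = (2 * (x + 1 - p - v / 2) + (1 - v % 2)) % 2 ∨
        mirror p v = mirror p (2 * (x + 1 - p - v / 2) + (1 - v % 2))) := by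
      unfold mirror; split_ifs <;> omega
    refine ⟨2 * (x + 1 - p - v / 2) + (1 - v % 2), ⟨by omega, by omega⟩, ?_⟩
    rcases baseC_of_not_mid hv (by omega) hm with ⟨_, e⟩ | ⟨_, e⟩ <;> omega

lemma baseN_bijOn {v : ℕ} (hv : v < 2 * p) :
    BijOn (baseN p v) (Iio (2 * p)) (Ico (v / 2) (v / 2 + 2 * p)) := by
  refine ⟨fun w hw => ?_, fun w₁ hw₁ w₂ hw₂ h => ?_, fun x hx => ?_⟩
  · simp only [mem_Iio, mem_Ico, baseN] at hw ⊢
    split_ifs <;> omega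
  · simp only [mem_Iio, baseN] at hw₁ hw₂ h
    split_ifs at h <;> omega
  · simp only [mem_Ico] at hx
    rcases lt_or_ge x (v / 2 + p) with hx' | hx'
    · exact ⟨2 * (x - v / 2) + v % 2, by simp only [mem_Iio]; omega,
        by unfold baseN; split_ifs <;> omega⟩
    · exact ⟨2 * (x - v / 2 - p) + (1 - v % 2), by simp only [mem_Iio]; omega,
        by unfold baseN; split_ifs <;> omega⟩

def base (hp : 1 ≤ p) : DoublableColoring (2 * p) (p - 1) where
  c := baseC p
  N := baseN p
  L v := v / 2
  two_le := by omega
  c_symm v w := by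
    unfold baseC
    rw [Nat.add_comm (mirror p w)]
    split_ifs <;> omega
  N_symm v w := by
    unfold baseN
    split_ifs <;> omega
  L_zero := rfl
  L_last := by omega
  L_le v hv := by omega
  c_bijOn _ hv := ⟨baseC_mapsTo hv, baseC_injOn hv, baseC_surjOn hv⟩
  N_bijOn _ := baseN_bijOn

end Base

/- `K_{2K}` is two copies of `K_K`, coloured by `c` and by `c + (2K - 1)`, joined by `K_{K,K}`
coloured by `N + (K - 1)`. The new `K_{2K,2K}` colouring uses `N`, `N + K`, `c + 2K` and puts the
colour `L v + K - 1` on the pair `(v, v)` of the upper copy, just below its other colours. -/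

def doubleC (v w : ℕ) : ℕ :=
  if v < K then (if w < K then P.c v w else P.N v (w - K) + (K - 1))
  else (if w < K then P.N w (v - K) + (K - 1) else P.c (v - K) (w - K) + (2 * K - 1))

def doubleN (v w : ℕ) : ℕ :=
  if v < K then (if w < K then P.N v w else P.N v (w - K) + K)
  else if w < K then P.N w (v - K) + K
  else if v = w then P.L (v - K) + (K - 1) else P.c (v - K) (w - K) + 2 * K

def doubleL (v : ℕ) : ℕ := if v < K then P.L v else P.L (v - K) + (K - 1)

lemma doubleC_bijOn {v : ℕ} (hv : v < 2 * K) :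
    BijOn (P.doubleC v) {w | w < 2 * K ∧ w ≠ v}
      (Ico (P.doubleL v) (P.doubleL v + (2 * K - 1))) := by
  have := P.two_le
  by_cases hvK : v < K
  · have h₁ : BijOn (P.doubleC v) {w | w < K ∧ w ≠ v} (Ico (P.L v) (P.L v + (K - 1))) :=
      (P.c_bijOn v hvK).congr fun w hw => by simp [doubleC, hvK, hw.1]
    have h₂ : BijOn (P.doubleC v) {w | K ≤ w ∧ w - K ∈ Iio K}
        (Ico (P.L v + (K - 1)) (P.L v + (2 * K - 1))) :=
      ((P.N_bijOn v hvK).shift_Ico K (K - 1) rfl (by omega)).congr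
        fun w hw => by simp [doubleC, hvK, not_lt.2 hw.1]
    convert h₁.union_Ico h₂ (by omega) (by omega) using 1
    · ext w; simp; omega
    · simp only [doubleL, if_pos hvK]
  · have hu : v - K < K := by omega
    have h₁ : BijOn (P.doubleC v) {w | 0 ≤ w ∧ w - 0 ∈ Iio K}
        (Ico (P.L (v - K) + (K - 1)) (P.L (v - K) + (2 * K - 1))) :=
      ((P.N_bijOn _ hu).shift_Ico 0 (K - 1) rfl (by omega)).congr
        fun w hw => by simp_all [doubleC, P.N_symm w]
    have h₂ : BijOn (P.doubleC v) {w | K ≤ w ∧ w - K ∈ {w | w < K ∧ w ≠ v - K}}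
        (Ico (P.L (v - K) + (2 * K - 1)) (P.L (v - K) + (K - 1) + (2 * K - 1))) :=
      ((P.c_bijOn _ hu).shift_Ico K (2 * K - 1) rfl (by omega)).congr
        fun w hw => by simp [doubleC, hvK, not_lt.2 hw.1]
    convert h₁.union_Ico h₂ (by omega) (by omega) using 1
    · ext w; simp; omega
    · simp only [doubleL, if_neg hvK]

lemma doubleN_bijOn {v : ℕ} (hv : v < 2 * K) :
    BijOn (P.doubleN v) (Iio (2 * K)) (Ico (P.doubleL v) (P.doubleL v + 2 * K)) := by
  have := P.two_le
  by_cases hvK : v < K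
  · have h₁ : BijOn (P.doubleN v) (Iio K) (Ico (P.L v) (P.L v + K)) :=
      (P.N_bijOn v hvK).congr fun w hw => by simp_all [doubleN]
    have h₂ : BijOn (P.doubleN v) {w | K ≤ w ∧ w - K ∈ Iio K}
        (Ico (P.L v + K) (P.L v + 2 * K)) :=
      ((P.N_bijOn v hvK).shift_Ico K K rfl (by omega)).congr
        fun w hw => by simp [doubleN, hvK, not_lt.2 hw.1]
    convert h₁.union_Ico h₂ (by omega) (by omega) using 1
    · ext w; simp; omega
    · simp only [doubleL, if_pos hvK]
  · have hu : v - K < K := by omega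
    have h₀ : BijOn (P.doubleN v) {v} (Ico (P.L (v - K) + (K - 1)) (P.L (v - K) + K)) := by
      rw [show Ico _ _ = {P.L (v - K) + (K - 1)} by ext; simp; omega, bijOn_singleton]
      simp [doubleN, hvK]
    have h₁ : BijOn (P.doubleN v) {w | 0 ≤ w ∧ w - 0 ∈ Iio K}
        (Ico (P.L (v - K) + K) (P.L (v - K) + 2 * K)) :=
      ((P.N_bijOn _ hu).shift_Ico 0 K rfl (by omega)).congr
        fun w hw => by simp_all [doubleN, P.N_symm w]
    have h₂ : BijOn (P.doubleN v) {w | K ≤ w ∧ w - K ∈ {w | w < K ∧ w ≠ v - K}}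
        (Ico (P.L (v - K) + 2 * K) (P.L (v - K) + (K - 1) + 2 * K)) :=
      ((P.c_bijOn _ hu).shift_Ico K (2 * K) rfl rfl).congr
        fun w ⟨hKw, _, hne⟩ => by
          simp only [doubleN, if_neg hvK, if_neg (not_lt.2 hKw), if_neg (show v ≠ w by omega)]
    convert (h₀.union_Ico h₁ (by omega) (by omega)).union_Ico h₂ (by omega) (by omega) using 1
    · ext w; simp; omega
    · simp only [doubleL, if_neg hvK]

def double : DoublableColoring (2 * K) (K - 1 + S) where
  c := P.doubleC
  N := P.doubleN
  L := P.doubleL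
  two_le := by have := P.two_le; omega
  c_symm v w := by
    unfold doubleC
    split_ifs <;> first | rfl | rw [P.c_symm]
  N_symm v w := by
    unfold doubleN
    split_ifs <;> first | rfl | omega | rw [P.N_symm] | rw [P.c_symm] | (subst_vars; rfl)
  L_zero := by simp [doubleL, P.L_zero, (by have := P.two_le; omega : 0 < K)]
  L_last := by
    have := P.two_le
    simp only [doubleL, if_neg (by omega : ¬ 2 * K - 1 < K), (by omega : 2 * K - 1 - K = K - 1),
      P.L_last]
    omega
  L_le v hv := by
    unfold doubleL
    split_ifs with hvK
    · have := P.L_le v hvK; omega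
    · have := P.L_le (v - K) (by omega); omega
  c_bijOn _ := P.doubleC_bijOn
  N_bijOn _ := P.doubleN_bijOn

end DoublableColoring

lemma exists_doublableColoring {p : ℕ} (hp : 1 ≤ p) (m : ℕ) :
    ∃ S, S + p + m + 1 = 2 * p * 2 ^ m ∧ Nonempty (DoublableColoring (2 * p * 2 ^ m) S) := by
  induction m with
  | zero => exact ⟨p - 1, by omega, ⟨by simpa using DoublableColoring.base hp⟩⟩
  | succ m ih =>
    obtain ⟨S, hS, ⟨P⟩⟩ := ih
    have hK : 2 * p * 2 ^ (m + 1) = 2 * (2 * p * 2 ^ m) := by ring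
    exact ⟨_, by omega, ⟨hK ▸ P.double⟩⟩

/-- Let `k = p·2^q` with `p` odd and `q ≥ 1`. Then `K_k[nK₁] ∈ 𝔑` and
`W(K_k[nK₁]) ≥ (2k - p - q)·n - 1`. -/
theorem complete_lex_empty_interval_colorable (k p q n : ℕ) (hp : Odd p) (hq : 1 ≤ q)
    (hk : k = p * 2 ^ q) (hn : 1 ≤ n) :
    IntervalColorable (lexProd (⊤ : SimpleGraph (Fin k)) (⊥ : SimpleGraph (Fin n))) ∧
    WNum (lexProd (⊤ : SimpleGraph (Fin k)) (⊥ : SimpleGraph (Fin n))) ≥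
      (2 * k - p - q) * n - 1 := by
  obtain ⟨m, rfl⟩ : ∃ m, q = m + 1 := ⟨q - 1, by omega⟩
  obtain ⟨S, hS, ⟨P⟩⟩ := exists_doublableColoring hp.pos m
  rw [show 2 * p * 2 ^ m = k by rw [hk, pow_succ]; ring] at hS P
  have := P.two_le
  have hcol := P.isIntervalColoring.lexProd_bot (n := n) (by omega)
  rw [show n * (S + k - 1 + 1) - 1 = (2 * k - p - (m + 1)) * n - 1 by
    rw [mul_comm]; congr 2; omega] at hcol
  have := Nat.mul_le_mul_right n (show 2 ≤ 2 * k - p - (m + 1) by omega)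
  exact ⟨⟨_, by omega, _, hcol⟩, HasIntervalColoring.le_WNum ⟨_, hcol⟩⟩
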